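/- arXiv:2509.24991 — 3 statements merged into one kernel-verified Lean document; each statement's English description precedes it below -/
import Mathlib

section
/- Let H be a real inner product space, n ≥ 1, and for i = 1,…,n let u_i, v_i ∈ H and r_i ∈ ℝ; let γ ∈ ℝ and λ > 0. Define matrices K, C ∈ ℝ^{n×n} by K_{ij} = ⟨u_i, u_j⟩ and C_{ij} = ⟨v_i, u_j⟩, and let r = (r_1,…,r_n) ∈ ℝⁿ. Suppose the matrix K + λ·n·I − γ·C is invertible and set b = (K + λ·n·I − γ·C)⁻¹ r. Then the element f̂ = Σ_{j=1}^n b_j · u_j ∈ H satisfies the normal equation (1/n)·Σ_{i=1}^n (⟨f̂,u_i⟩ − r_i − γ·⟨f̂,v_i⟩)·u_i + λ·f̂ = 0, i.e., f̂ is the fixed-point minimizer of the regularized TD least-squares objective. -/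
open scoped BigOperators
open Matrix

/-!
Write `A = K + λ n I − γ C`. The inner products of `f̂ = Σⱼ bⱼ uⱼ` against the `uᵢ` and `vᵢ` are the
coordinates of `K b` and `C b`, so the coefficient of `uᵢ` in the normal equation is
`((K b)ᵢ − rᵢ − γ (C b)ᵢ) / n + λ bᵢ = ((A b)ᵢ − rᵢ) / n`, which vanishes because `A b = r`.
-/

theorem inner_sum_smul_eq_mulVec {H : Type*} [NormedAddCommGroup H] [InnerProductSpace ℝ H]
    {ι κ : Type*} [Fintype ι] (G : Matrix κ ι ℝ) (w : κ → H) (u : ι → H)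
    (hG : ∀ i j, G i j = inner ℝ (w i) (u j)) (b : ι → ℝ) (i : κ) :
    inner ℝ (∑ j, b j • u j) (w i) = (G *ᵥ b) i := by
  simp only [sum_inner, real_inner_smul_left, mulVec, dotProduct, hG]
  exact Finset.sum_congr rfl fun j _ => by rw [real_inner_comm, mul_comm]

theorem Matrix.mulVec_nonsing_inv_mulVec_of_isUnit {m R : Type*} [Fintype m] [DecidableEq m]
    [CommRing R] {A : Matrix m m R} (hA : IsUnit A) (r : m → R) : A *ᵥ (A⁻¹ *ᵥ r) = r := by
  rw [mulVec_mulVec, mul_nonsing_inv _ ((isUnit_iff_isUnit_det A).mp hA), one_mulVec]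

theorem td_coefficient_eq_zero {n : ℕ} (K C : Matrix (Fin n) (Fin n) ℝ) (γ lam : ℝ)
    (b r : Fin n → ℝ)
    (hb : (K + (lam * (n : ℝ)) • (1 : Matrix (Fin n) (Fin n) ℝ) - γ • C) *ᵥ b = r)
    (i : Fin n) :
    (1 / (n : ℝ)) * ((K *ᵥ b) i - r i - γ * (C *ᵥ b) i) + lam * b i = 0 := by
  have hn : (n : ℝ) ≠ 0 := Nat.cast_ne_zero.mpr i.pos.ne'
  have hbi := congrFun hb i
  simp only [sub_mulVec, add_mulVec, smul_mulVec, one_mulVec, Pi.sub_apply, Pi.add_apply,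
    Pi.smul_apply, smul_eq_mul] at hbi
  field_simp
  linarith

theorem smul_sum_smul_add_smul_sum_smul {R M ι : Type*} [Semiring R] [AddCommMonoid M]
    [Module R M] [Fintype ι] (c lam : R) (x b : ι → R) (u : ι → M) :
    c • (∑ i, x i • u i) + lam • ∑ i, b i • u i = ∑ i, (c * x i + lam * b i) • u i := by
  simp only [Finset.smul_sum, smul_smul, ← Finset.sum_add_distrib, add_smul]

theorem krr_td_closed_form_solves_normal_equation_general
    {H : Type*} [NormedAddCommGroup H] [InnerProductSpace ℝ H]
    (n : ℕ) (u v : Fin n → H) (r : Fin n → ℝ)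
    (γ lam : ℝ)
    (K C : Matrix (Fin n) (Fin n) ℝ)
    (hK : ∀ i j, K i j = (inner ℝ (u i) (u j) : ℝ))
    (hC : ∀ i j, C i j = (inner ℝ (v i) (u j) : ℝ))
    (hA : IsUnit (K + (lam * (n : ℝ)) • (1 : Matrix (Fin n) (Fin n) ℝ) - γ • C))
    (b : Fin n → ℝ)
    (hb : b = (K + (lam * (n : ℝ)) • (1 : Matrix (Fin n) (Fin n) ℝ) - γ • C)⁻¹ *ᵥ r)
    (fhat : H) (hfhat : fhat = ∑ j, b j • u j) :
    (1 / (n : ℝ)) •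
        (∑ i, ((inner ℝ fhat (u i) : ℝ) - r i - γ * (inner ℝ fhat (v i) : ℝ)) • u i)
      + lam • fhat = 0 := by
  have hAb := hb ▸ mulVec_nonsing_inv_mulVec_of_isUnit hA r
  subst hfhat
  rw [smul_sum_smul_add_smul_sum_smul]
  refine Finset.sum_eq_zero fun i _ => ?_
  rw [inner_sum_smul_eq_mulVec K u u hK, inner_sum_smul_eq_mulVec C v u hC,
    td_coefficient_eq_zero K C γ lam b r hAb i, zero_smul]

/-- Proposition 4.1: the representer-theorem closed form of the kernel
TD estimator. With Gram matrix `K`, cross-Gram matrix `C`, and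
`b = (K + λ n I − γ C)⁻¹ r`, the element `f̂ = Σ_j b_j • u_j` satisfies the KRR-TD normal
equation. -/
theorem krr_td_closed_form_solves_normal_equation
    {H : Type*} [NormedAddCommGroup H] [InnerProductSpace ℝ H]
    (n : ℕ) (hn : 1 ≤ n) (u v : Fin n → H) (r : Fin n → ℝ)
    (γ lam : ℝ) (hlam : 0 < lam)
    (K C : Matrix (Fin n) (Fin n) ℝ)
    (hK : ∀ i j, K i j = (inner ℝ (u i) (u j) : ℝ))
    (hC : ∀ i j, C i j = (inner ℝ (v i) (u j) : ℝ))
    (hA : IsUnit (K + (lam * (n : ℝ)) • (1 : Matrix (Fin n) (Fin n) ℝ) - γ • C))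
    (b : Fin n → ℝ)
    (hb : b = (K + (lam * (n : ℝ)) • (1 : Matrix (Fin n) (Fin n) ℝ) - γ • C)⁻¹ *ᵥ r)
    (fhat : H) (hfhat : fhat = ∑ j, b j • u j) :
    (1 / (n : ℝ)) •
        (∑ i, ((inner ℝ fhat (u i) : ℝ) - r i - γ * (inner ℝ fhat (v i) : ℝ)) • u i)
      + lam • fhat = 0 :=
  krr_td_closed_form_solves_normal_equation_general n u v r γ lam K C hK hC hA b hb fhat hfhat
end

section
/- Let H be a real inner product space, n ≥ 1, and for i = 1,…,n let u_i, v_i ∈ H and r_i ∈ ℝ; let γ ∈ ℝ and λ > 0. Let f̂ ∈ H satisfy the normal equation (1/n)·Σ_{i=1}^n (⟨f̂,u_i⟩ − r_i − γ·⟨f̂,v_i⟩)·u_i + λ·f̂ = 0. Let Q ∈ H be arbitrary, define the residuals ε_i = r_i + γ·⟨Q,v_i⟩ − ⟨Q,u_i⟩ and the difference D = f̂ − Q. Then the following identity holds: (1/n)·Σ_{i=1}^n ( ⟨D,u_i⟩² − γ·⟨D,u_i⟩·⟨D,v_i⟩ ) = (1/n)·Σ_{i=1}^n ε_i·⟨D,u_i⟩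 − λ·⟨D, f̂⟩. -/
/-!
Pair the normal equation with `D`: the empirical TD error of `f̂` at sample `i` is the TD error
of `D` (the homogeneous part, with `r = 0`) minus the Bellman residual `ε_i` of `Q`, and the
regulariser contributes `λ⟨D, f̂⟩`.
-/

section
variable {H : Type*} [NormedAddCommGroup H] [InnerProductSpace ℝ H]

theorem inner_sum_smul_eq_neg_of_smul_sum_add_smul_eq_zero {ι : Type*} (s : Finset ι)
    {c lam : ℝ} {a : ι → ℝ} {u : ι → H} {f : H}
    (h : c • ∑ i ∈ s, a i • u i + lam • f = 0) (w : H) :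
    c * ∑ i ∈ s, a i * inner ℝ w (u i) = -(lam * inner ℝ w f) := by
  have hw := congrArg (inner ℝ w) h
  simp only [inner_add_right, real_inner_smul_right, inner_sum, inner_zero_right] at hw
  linarith

theorem td_error_eq_sub_bellman_residual (γ r : ℝ) (f Q u v : H) :
    inner ℝ f u - r - γ * inner ℝ f v
      = (inner ℝ (f - Q) u - γ * inner ℝ (f - Q) v) - (r + γ * inner ℝ Q v - inner ℝ Q u) := by
  simp only [inner_sub_left]
  ring

end

theorem krr_td_error_decomposition_general
    {H : Type*} [NormedAddCommGroup H] [InnerProductSpace ℝ H]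
    (n : ℕ) (u v : Fin n → H) (r : Fin n → ℝ)
    (γ lam : ℝ) (fhat : H)
    (hnormal :
      (1 / (n : ℝ)) •
          (∑ i, ((inner ℝ fhat (u i) : ℝ) - r i - γ * (inner ℝ fhat (v i) : ℝ)) • u i)
        + lam • fhat = 0)
    (Q : H) (ε : Fin n → ℝ)
    (hε : ∀ i, ε i = r i + γ * (inner ℝ Q (v i) : ℝ) - (inner ℝ Q (u i) : ℝ))
    (D : H) (hD : D = fhat - Q) :
    (1 / (n : ℝ)) *
        ∑ i, ((inner ℝ D (u i) : ℝ) ^ 2 - γ * (inner ℝ D (u i) : ℝ) * (inner ℝ D (v i) : ℝ))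
      = (1 / (n : ℝ)) * ∑ i, ε i * (inner ℝ D (u i) : ℝ) - lam * (inner ℝ D fhat : ℝ) := by
  have hpaired := inner_sum_smul_eq_neg_of_smul_sum_add_smul_eq_zero _ hnormal D
  simp only [td_error_eq_sub_bellman_residual γ _ fhat Q, ← hD, ← hε] at hpaired
  calc (1 / (n : ℝ)) *
        ∑ i, ((inner ℝ D (u i) : ℝ) ^ 2 - γ * (inner ℝ D (u i) : ℝ) * (inner ℝ D (v i) : ℝ))
      = (1 / (n : ℝ)) * ∑ i, ((inner ℝ D (u i) - γ * inner ℝ D (v i)) - ε i) * inner ℝ D (u i)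
          + (1 / (n : ℝ)) * ∑ i, ε i * (inner ℝ D (u i) : ℝ) := by
        rw [← mul_add, ← Finset.sum_add_distrib]
        congr 1
        exact Finset.sum_congr rfl fun i _ => by ring
    _ = _ := by rw [hpaired]; ring

/-- Proposition 4.2: the statistical–approximation error decomposition
for the KRR-TD estimator `f̂`, with Bellman residuals `ε_i` and difference `D = f̂ − Q`. -/
theorem krr_td_error_decomposition
    {H : Type*} [NormedAddCommGroup H] [InnerProductSpace ℝ H]
    (n : ℕ) (hn : 1 ≤ n) (u v : Fin n → H) (r : Fin n → ℝ)
    (γ lam : ℝ) (hlam : 0 < lam) (fhat : H)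
    (hnormal :
      (1 / (n : ℝ)) •
          (∑ i, ((inner ℝ fhat (u i) : ℝ) - r i - γ * (inner ℝ fhat (v i) : ℝ)) • u i)
        + lam • fhat = 0)
    (Q : H) (ε : Fin n → ℝ)
    (hε : ∀ i, ε i = r i + γ * (inner ℝ Q (v i) : ℝ) - (inner ℝ Q (u i) : ℝ))
    (D : H) (hD : D = fhat - Q) :
    (1 / (n : ℝ)) *
        ∑ i, ((inner ℝ D (u i) : ℝ) ^ 2 - γ * (inner ℝ D (u i) : ℝ) * (inner ℝ D (v i) : ℝ))
      = (1 / (n : ℝ)) * ∑ i, ε i * (inner ℝ D (u i) : ℝ) - lam * (inner ℝ D fhat : ℝ) :=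
  krr_td_error_decomposition_general n u v r γ lam fhat hnormal Q ε hε D hD
end

section
/- Let (A, 𝔄) be a measurable space and let B > 0. Let q⁰ be a probability measure on A, and for each k ≥ 0 let f_k : A → ℝ be a bounded measurable function with sup_a |f_k(a)| ≤ B, let Δ_k > 0, and define recursively q^{k+1} as the Gibbs tilt of q^k by Δ_k·f_k (i.e., q^{k+1} has q^k-density e^{Δ_k f_k}/∫e^{Δ_k f_k}dq^k). For each k let g_k : A → ℝ be a bounded measurable function with sup_a |g_k(a)| ≤ B. Let p be a probability measure with p ≪ q⁰ and KL(p‖q⁰) < ∞. Then for every integer N ≥ 1: inf_{0 ≤ k < N} ∫ g_k d(p − q^k) ≤ [ KL(p‖q⁰) + Σ_{k=0}^{N−1} ( 2·Δ_k·sup_a|f_k(a) − g_k(a)| + Δ_k²·2·B² ) ] / ( Σ_{k=0}^{N−1} Δ_k ). -/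
/-!
Each Gibbs tilt is an exact mirror-descent step for the entropy: by the chain rule for
log-likelihood ratios, `KL(p‖q^{k+1}) = KL(p‖q^k) - Δ_k ∫ f_k dp + log ∫ e^{Δ_k f_k} dq^k`, and
Hoeffding's lemma bounds the log-partition function by `Δ_k ∫ f_k dq^k + Δ_k² B² / 2`. Replacing
`f_k` by `g_k` costs `2 Δ_k sup |f_k - g_k|`. Summing over `k < N`, the divergences telescope and
the last one is nonnegative, so `∑ Δ_k ∫ g_k d(p - q^k)` is at most the numerator of the bound;
hence some gap is at most the `Δ`-weighted average.
-/

open MeasureTheory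

/-- The Kullback–Leibler divergence `KL(p‖q) = ∫ log (dp/dq) dp`, as a real number
(meaningful when `p ≪ q` and the log-density is `p`-integrable). -/
noncomputable def klDivergence {A : Type*} [MeasurableSpace A] (p q : Measure A) : ℝ :=
  ∫ a, Real.log ((p.rnDeriv q a).toReal) ∂p

/-- The Gibbs tilt of a measure `q` by a function `g`: the measure with `q`-density
`e^{g} / ∫ e^{g} dq`. -/
noncomputable def gibbsTilt {A : Type*} [MeasurableSpace A] (q : Measure A) (g : A → ℝ) :
    Measure A :=
  q.withDensity fun a => ENNReal.ofReal (Real.exp (g a) / ∫ a, Real.exp (g a) ∂q)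

open Real ProbabilityTheory

section

variable {A : Type*} [MeasurableSpace A]

lemma integrable_exp_of_abs_le {μ : Measure A} [IsFiniteMeasure μ] {f : A → ℝ} {C : ℝ}
    (hf : Measurable f) (hfC : ∀ a, |f a| ≤ C) : Integrable (fun a => exp (f a)) μ :=
  .of_bound (by fun_prop) (exp C) <| .of_forall fun a =>
    (abs_of_pos (exp_pos _)).trans_le (exp_le_exp.2 (le_of_abs_le (hfC a)))

lemma gibbsTilt_eq_tilted (q : Measure A) (g : A → ℝ) : gibbsTilt q g = q.tilted g := rfl

lemma log_integral_exp_mul_le_of_mem_Icc {ν : Measure A} [IsProbabilityMeasure ν] {X : A → ℝ}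
    {a b : ℝ} (hX : AEMeasurable X ν) (hab : ∀ᵐ x ∂ν, X x ∈ Set.Icc a b) (t : ℝ) :
    log (∫ x, exp (t * X x) ∂ν) ≤ t * ∫ x, X x ∂ν + (b - a) ^ 2 / 8 * t ^ 2 := by
  have hmgf := (hasSubgaussianMGF_of_mem_Icc hX hab).mgf_le t
  simp_rw [sub_eq_add_neg, mgf_add_const] at hmgf
  have hpos : 0 < mgf X ν t := mgf_pos (integrable_exp_mul_of_mem_Icc hX hab)
  rw [← le_div_iff₀ (exp_pos _), div_eq_mul_inv, ← exp_neg, ← exp_add] at hmgf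
  rw [← mgf, log_le_iff_le_exp hpos]
  refine hmgf.trans_eq (congrArg exp ?_)
  simp only [NNReal.coe_pow, NNReal.coe_div, coe_nnnorm, norm_eq_abs, NNReal.coe_ofNat,
    div_pow, sq_abs]
  ring

lemma integral_sub_integral_le_of_abs_sub_le {p q : Measure A} [IsProbabilityMeasure p]
    [IsProbabilityMeasure q] {f g : A → ℝ} {S : ℝ} (hfp : Integrable f p) (hgp : Integrable g p)
    (hfq : Integrable f q) (hgq : Integrable g q) (hS : ∀ a, |f a - g a| ≤ S) :
    (∫ a, g a ∂p) - ∫ a, g a ∂q ≤ (∫ a, f a ∂p) - (∫ a, f a ∂q) + 2 * S := by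
  have hp : ∫ a, g a ∂p ≤ (∫ a, f a ∂p) + S := by
    have := integral_mono hgp (hfp.add (integrable_const S)) fun a =>
      (show g a ≤ f a + S by linarith [neg_abs_le (f a - g a), hS a])
    simpa [integral_add hfp (integrable_const S)] using this
  have hq : ∫ a, f a ∂q ≤ (∫ a, g a ∂q) + S := by
    have := integral_mono hfq (hgq.add (integrable_const S)) fun a =>
      (show f a ≤ g a + S by linarith [le_abs_self (f a - g a), hS a])
    simpa [integral_add hgq (integrable_const S)] using this
  linarith

lemma mul_integral_sub_integral_le_of_mem_Icc {p ν : Measure A} [IsProbabilityMeasure p]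
    [IsProbabilityMeasure ν] (hpν : p ≪ ν) (hllr : Integrable (llr p ν) p) {X : A → ℝ}
    {a b : ℝ} (hX : Measurable X) (hab : ∀ x, X x ∈ Set.Icc a b) (t : ℝ) :
    t * ((∫ x, X x ∂p) - ∫ x, X x ∂ν)
      ≤ (∫ x, llr p ν x ∂p) - (∫ x, llr p (ν.tilted (t * X ·)) x ∂p) + (b - a) ^ 2 / 8 * t ^ 2 := by
  have hXp : Integrable X p := .of_mem_Icc a b hX.aemeasurable (.of_forall hab)
  rw [integral_llr_tilted_right hpν (hXp.const_mul t)
    (integrable_exp_mul_of_mem_Icc hX.aemeasurable (.of_forall hab)) hllr, integral_const_mul]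
  linarith [log_integral_exp_mul_le_of_mem_Icc hX.aemeasurable (.of_forall hab) (ν := ν) t]

lemma mul_integral_sub_integral_le_of_abs_sub_le {p ν : Measure A} [IsProbabilityMeasure p]
    [IsProbabilityMeasure ν] (hpν : p ≪ ν) (hllr : Integrable (llr p ν) p) {f g : A → ℝ}
    {a b S t : ℝ} (hf : Measurable f) (hab : ∀ x, f x ∈ Set.Icc a b) (hgp : Integrable g p)
    (hgν : Integrable g ν) (hS : ∀ x, |f x - g x| ≤ S) (ht : 0 ≤ t) :
    t * ((∫ x, g x ∂p) - ∫ x, g x ∂ν)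
      ≤ (∫ x, llr p ν x ∂p) - (∫ x, llr p (ν.tilted (t * f ·)) x ∂p)
        + (2 * t * S + (b - a) ^ 2 / 8 * t ^ 2) := by
  have hfp : Integrable f p := .of_mem_Icc a b hf.aemeasurable (.of_forall hab)
  have hfν : Integrable f ν := .of_mem_Icc a b hf.aemeasurable (.of_forall hab)
  have hgap := integral_sub_integral_le_of_abs_sub_le hfp hgp hfν hgν hS
  nlinarith [mul_le_mul_of_nonneg_left hgap ht,
    mul_integral_sub_integral_le_of_mem_Icc hpν hllr hf hab t]

end

section GibbsIterates

variable {A : Type*} [MeasurableSpace A] {q : ℕ → Measure A} {F : ℕ → A → ℝ} {C : ℕ → ℝ}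

lemma isProbabilityMeasure_gibbsTilt_iterate (hq0 : IsProbabilityMeasure (q 0))
    (hrec : ∀ k, q (k + 1) = gibbsTilt (q k) (F k)) (hFm : ∀ k, Measurable (F k))
    (hFC : ∀ k a, |F k a| ≤ C k) (k : ℕ) : IsProbabilityMeasure (q k) := by
  induction k with
  | zero => exact hq0
  | succ k ih =>
    rw [hrec k, gibbsTilt_eq_tilted]
    exact isProbabilityMeasure_tilted (integrable_exp_of_abs_le (hFm k) (hFC k))

lemma absolutelyContinuous_gibbsTilt_iterate {p : Measure A} (hq0 : IsProbabilityMeasure (q 0))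
    (hrec : ∀ k, q (k + 1) = gibbsTilt (q k) (F k)) (hFm : ∀ k, Measurable (F k))
    (hFC : ∀ k a, |F k a| ≤ C k) (hp : p ≪ q 0) (k : ℕ) : p ≪ q k := by
  induction k with
  | zero => exact hp
  | succ k ih =>
    have := isProbabilityMeasure_gibbsTilt_iterate hq0 hrec hFm hFC k
    rw [hrec k, gibbsTilt_eq_tilted]
    exact ih.trans (absolutelyContinuous_tilted (integrable_exp_of_abs_le (hFm k) (hFC k)))

lemma integrable_llr_gibbsTilt_iterate {p : Measure A} [IsFiniteMeasure p]
    (hq0 : IsProbabilityMeasure (q 0)) (hrec : ∀ k, q (k + 1) = gibbsTilt (q k) (F k))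
    (hFm : ∀ k, Measurable (F k)) (hFC : ∀ k a, |F k a| ≤ C k) (hp : p ≪ q 0)
    (hllr : Integrable (llr p (q 0)) p) (k : ℕ) : Integrable (llr p (q k)) p := by
  induction k with
  | zero => exact hllr
  | succ k ih =>
    have := isProbabilityMeasure_gibbsTilt_iterate hq0 hrec hFm hFC k
    rw [hrec k, gibbsTilt_eq_tilted]
    exact integrable_llr_tilted_right (absolutelyContinuous_gibbsTilt_iterate hq0 hrec hFm hFC hp k)
      (.of_bound (hFm k).aestronglyMeasurable (C k) (.of_forall (hFC k))) ih
      (integrable_exp_of_abs_le (hFm k) (hFC k))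

end GibbsIterates

lemma exists_lt_le_div_sum_of_mul_le_sub_add {Φ G w e : ℕ → ℝ} {N : ℕ} (hN : 1 ≤ N)
    (hw : ∀ k, 0 < w k) (hΦ : 0 ≤ Φ N) (hstep : ∀ k < N, w k * G k ≤ Φ k - Φ (k + 1) + e k) :
    ∃ k < N, G k ≤ (Φ 0 + ∑ k ∈ Finset.range N, e k) / ∑ k ∈ Finset.range N, w k := by
  have hsum : 0 < ∑ k ∈ Finset.range N, w k :=
    Finset.sum_pos (fun k _ => hw k) ⟨0, Finset.mem_range.2 hN⟩
  set R := (Φ 0 + ∑ k ∈ Finset.range N, e k) / ∑ k ∈ Finset.range N, w k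
  obtain ⟨k, hk, hle⟩ : ∃ k ∈ Finset.range N, w k * G k ≤ w k * R := by
    refine Finset.exists_le_of_sum_le ⟨0, Finset.mem_range.2 hN⟩ ?_
    calc ∑ k ∈ Finset.range N, w k * G k
        ≤ ∑ k ∈ Finset.range N, (Φ k - Φ (k + 1) + e k) :=
          Finset.sum_le_sum fun k hk => hstep k (Finset.mem_range.1 hk)
      _ = Φ 0 - Φ N + ∑ k ∈ Finset.range N, e k := by
          rw [Finset.sum_add_distrib, Finset.sum_range_sub']
      _ ≤ ∑ k ∈ Finset.range N, w k * R := by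
          rw [← Finset.sum_mul, mul_div_cancel₀ _ hsum.ne']
          linarith
  exact ⟨k, Finset.mem_range.1 hk, le_of_mul_le_mul_left hle (hw k)⟩

theorem mirror_descent_regret_bound_general
    {A : Type*} [MeasurableSpace A] (B : ℝ)
    (q : ℕ → Measure A) (hq0 : IsProbabilityMeasure (q 0))
    (f : ℕ → A → ℝ) (hfmeas : ∀ k, Measurable (f k)) (hfB : ∀ k a, |f k a| ≤ B)
    (Δ : ℕ → ℝ) (hΔ : ∀ k, 0 < Δ k)
    (hrec : ∀ k, q (k + 1) = gibbsTilt (q k) fun a => Δ k * f k a)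
    (g : ℕ → A → ℝ) (hgmeas : ∀ k, Measurable (g k)) (hgB : ∀ k a, |g k a| ≤ B)
    (p : Measure A) [IsProbabilityMeasure p] (hp : p ≪ q 0)
    (hKL : Integrable (fun a => Real.log ((p.rnDeriv (q 0) a).toReal)) p)
    (N : ℕ) (hN : 1 ≤ N) :
    ∃ k < N,
      (∫ a, g k a ∂p) - ∫ a, g k a ∂(q k)
        ≤ (klDivergence p (q 0)
            + ∑ k ∈ Finset.range N,
                (2 * Δ k * (⨆ a, |f k a - g k a|) + (Δ k) ^ 2 * (2 * B ^ 2)))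
          / ∑ k ∈ Finset.range N, Δ k := by
  have hFm k : Measurable fun a => Δ k * f k a := (hfmeas k).const_mul _
  have hFC k a : |Δ k * f k a| ≤ Δ k * B := by
    rw [abs_mul, abs_of_pos (hΔ k)]
    exact mul_le_mul_of_nonneg_left (hfB k a) (hΔ k).le
  have hprob := isProbabilityMeasure_gibbsTilt_iterate hq0 hrec hFm hFC
  have hac := absolutelyContinuous_gibbsTilt_iterate hq0 hrec hFm hFC hp
  have hllr := integrable_llr_gibbsTilt_iterate hq0 hrec hFm hFC hp hKL
  have hgint k {μ : Measure A} [IsFiniteMeasure μ] : Integrable (g k) μ :=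
    .of_bound (hgmeas k).aestronglyMeasurable B (.of_forall (hgB k))
  have hS k a : |f k a - g k a| ≤ ⨆ a, |f k a - g k a| :=
    le_ciSup (f := fun a => |f k a - g k a|) ⟨2 * B, by
      rintro _ ⟨x, rfl⟩
      linarith [abs_sub (f k x) (g k x), hfB k x, hgB k x]⟩ a
  refine exists_lt_le_div_sum_of_mul_le_sub_add (Φ := fun k => ∫ a, llr p (q k) a ∂p) hN hΔ
    ?_ fun k _ => ?_
  · have := hprob N
    simpa using InformationTheory.integral_llr_add_sub_measure_univ_nonneg (hac N) (hllr N)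
  · have := hprob k
    have hstep := mul_integral_sub_integral_le_of_abs_sub_le (hac k) (hllr k) (hfmeas k)
      (fun a => abs_le.1 (hfB k a)) (hgint k) (hgint k) (hS k) (hΔ k).le
    rw [← gibbsTilt_eq_tilted, ← hrec k] at hstep
    -- Hoeffding's constant `(B - -B) ^ 2 / 8 = B ^ 2 / 2` is below the stated `2 * B ^ 2`.
    nlinarith [sq_nonneg (Δ k * B)]

/-- abstract mirror-descent regret bound underlying Theorem 5.2:
for iterates `q^{k+1}` obtained by Gibbs-tilting `q^k` by `Δ_k f_k`, and comparison
functions `g_k`, the smallest gap `∫ g_k d(p − q^k)` over `k < N` is bounded by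
`(KL(p‖q⁰) + Σ_k (2 Δ_k sup|f_k − g_k| + 2 Δ_k² B²)) / Σ_k Δ_k`. -/
theorem mirror_descent_regret_bound
    {A : Type*} [MeasurableSpace A] [Nonempty A] (B : ℝ) (hB : 0 < B)
    (q : ℕ → Measure A) (hq0 : IsProbabilityMeasure (q 0))
    (f : ℕ → A → ℝ) (hfmeas : ∀ k, Measurable (f k)) (hfB : ∀ k a, |f k a| ≤ B)
    (Δ : ℕ → ℝ) (hΔ : ∀ k, 0 < Δ k)
    (hrec : ∀ k, q (k + 1) = gibbsTilt (q k) fun a => Δ k * f k a)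
    (g : ℕ → A → ℝ) (hgmeas : ∀ k, Measurable (g k)) (hgB : ∀ k a, |g k a| ≤ B)
    (p : Measure A) [IsProbabilityMeasure p] (hp : p ≪ q 0)
    (hKL : Integrable (fun a => Real.log ((p.rnDeriv (q 0) a).toReal)) p)
    (N : ℕ) (hN : 1 ≤ N) :
    ∃ k < N,
      (∫ a, g k a ∂p) - ∫ a, g k a ∂(q k)
        ≤ (klDivergence p (q 0)
            + ∑ k ∈ Finset.range N,
                (2 * Δ k * (⨆ a, |f k a - g k a|) + (Δ k) ^ 2 * (2 * B ^ 2)))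
          / ∑ k ∈ Finset.range N, Δ k :=
  mirror_descent_regret_bound_general B q hq0 f hfmeas hfB Δ hΔ hrec g hgmeas hgB p hp hKL N hN
end
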